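/- arXiv:1108.3197 — 6 statements merged into one kernel-verified Lean document; each statement's English description precedes it below -/
import Mathlib

section
/- For any positive integer n, the double sum over 1 ≤ k ≤ i ≤ n of (2^k - 1)/(k·i) equals the sum over j from 1 to n of (1/j²)·C(n, j). -/
/-!
Write `a m = ∑_{k=1}^m (2^k - 1)/k`, so that the left-hand side is `∑_{i=1}^n a i / i`.
Absorption `C(m, j-1)/j = C(m+1, j)/(m+1)` together with Pascal's rule gives
`a m = ∑_{j=1}^m C(m, j)/j`, and the same two facts show that the right-hand side grows by
`a (n+1)/(n+1)` when `n` is replaced by `n + 1`; both sides then agree by induction.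
-/

open Finset

lemma sum_Icc_one_choose (m : ℕ) :
    ∑ j ∈ Icc 1 m, (m.choose j : ℚ) = 2 ^ m - 1 := by
  have hrange : range (m + 1) = insert 0 (Icc 1 m) := by
    ext x; simp only [mem_range, mem_insert, mem_Icc]; omega
  have h := Nat.sum_range_choose m
  rw [hrange, sum_insert (by simp), Nat.choose_zero_right] at h
  rw [eq_sub_iff_add_eq, add_comm]
  exact_mod_cast h

lemma sum_Icc_choose_succ_mul (m : ℕ) (g : ℕ → ℚ) :
    ∑ j ∈ Icc 1 (m + 1), ((m + 1).choose j : ℚ) * g j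
      = ∑ j ∈ Icc 1 m, (m.choose j : ℚ) * g j
        + ∑ j ∈ Icc 1 (m + 1), (m.choose (j - 1) : ℚ) * g j := by
  have pascal : ∀ j ∈ Icc 1 (m + 1), ((m + 1).choose j : ℚ) * g j
      = (m.choose j : ℚ) * g j + (m.choose (j - 1) : ℚ) * g j := by
    intro j hj
    rw [Nat.choose_succ_left m j (mem_Icc.mp hj).1]
    push_cast
    ring
  rw [sum_congr rfl pascal, sum_add_distrib, sum_Icc_succ_top (by omega : 1 ≤ m + 1),
    Nat.choose_succ_self, Nat.cast_zero, zero_mul, add_zero]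

lemma sum_Icc_choose_pred_div_mul (m : ℕ) (g : ℕ → ℚ) :
    ∑ j ∈ Icc 1 (m + 1), (m.choose (j - 1) : ℚ) / j * g j
      = (∑ j ∈ Icc 1 (m + 1), ((m + 1).choose j : ℚ) * g j) / (m + 1) := by
  rw [sum_div]
  refine sum_congr rfl fun j hj => ?_
  obtain ⟨k, rfl⟩ : ∃ k, j = k + 1 := ⟨j - 1, by have := (mem_Icc.mp hj).1; omega⟩
  have absorb : ((m : ℚ) + 1) * m.choose k = (m + 1).choose (k + 1) * ((k : ℚ) + 1) := by
    exact_mod_cast Nat.add_one_mul_choose_eq m k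
  rw [Nat.add_sub_cancel]
  push_cast
  field_simp
  linear_combination g (k + 1) * absorb

lemma sum_Icc_two_pow_sub_one_div (m : ℕ) :
    ∑ k ∈ Icc 1 m, ((2 : ℚ) ^ k - 1) / k = ∑ j ∈ Icc 1 m, (m.choose j : ℚ) / j := by
  induction m with
  | zero => simp
  | succ m ih =>
    have step := sum_Icc_choose_succ_mul m fun j => 1 / (j : ℚ)
    have absorb := sum_Icc_choose_pred_div_mul m fun _ => 1
    simp only [mul_one, mul_one_div] at step absorb
    rw [sum_Icc_succ_top (by omega : 1 ≤ m + 1), ih, step, absorb, sum_Icc_one_choose]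
    push_cast
    ring

theorem stmt0_general (n : ℕ) :
    ∑ i ∈ Finset.Icc 1 n, ∑ k ∈ Finset.Icc 1 i, ((2 : ℚ) ^ k - 1) / ((k : ℚ) * i)
      = ∑ j ∈ Finset.Icc 1 n, (1 : ℚ) / (j : ℚ) ^ 2 * (n.choose j) := by
  induction n with
  | zero => simp
  | succ n ih =>
    have inner : ∑ k ∈ Icc 1 (n + 1), ((2 : ℚ) ^ k - 1) / ((k : ℚ) * ↑(n + 1))
        = (∑ j ∈ Icc 1 (n + 1), ((n + 1).choose j : ℚ) / j) / (n + 1) := by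
      simp only [← div_div, ← sum_div, sum_Icc_two_pow_sub_one_div]
      push_cast
      rfl
    have step := sum_Icc_choose_succ_mul n fun j => 1 / (j : ℚ) ^ 2
    have absorb := sum_Icc_choose_pred_div_mul n fun j => 1 / (j : ℚ)
    simp only [mul_one_div, div_div, ← sq] at step absorb
    rw [sum_Icc_succ_top (by omega : 1 ≤ n + 1), ih, inner]
    simp only [one_div_mul_eq_div, step, absorb]

theorem stmt0 (n : ℕ) (hn : 0 < n) :
    ∑ i ∈ Finset.Icc 1 n, ∑ k ∈ Finset.Icc 1 i, ((2 : ℚ) ^ k - 1) / ((k : ℚ) * i)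
      = ∑ j ∈ Finset.Icc 1 n, (1 : ℚ) / (j : ℚ) ^ 2 * (n.choose j) :=
  stmt0_general n
end

section
/- For any odd positive integer n, the sum over k from 1 to n-1 of ((-2)^k / k)·C(n, k) equals -2·H_{n-1} + H_{(n-1)/2} + (2^n - 2)/n, where H_m = ∑_{j=1}^m 1/j is the m-th harmonic number. -/
/-!
Induction on `n`, using `(n + 1 - k) * C(n + 1, k) = (n + 1) * C(n, k)` and the binomial theorem,
gives `∑_{k=1}^n C(n, k) x^k / k = ∑_{j=1}^n ((1 + x)^j - 1) / j`. At `x = -2` the summand on the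
right is `-2 / j` for odd `j` and `0` for even `j`, so the sum is `H ⌊n/2⌋ - 2 H n`. For odd `n`,
removing the term `k = n`, namely `-2^n / n`, gives the claim.
-/

noncomputable def H (n : ℕ) : ℚ := ∑ i ∈ Finset.Icc 1 n, (1 : ℚ) / i

open Finset

lemma H_succ (n : ℕ) : H (n + 1) = H n + 1 / (n + 1) := by
  rw [H, H, sum_Icc_succ_top (by omega)]
  push_cast
  rfl

lemma sum_Icc_one_pow_mul_choose {R : Type*} [CommRing R] (x : R) (n : ℕ) :
    ∑ k ∈ Icc 1 n, x ^ k * n.choose k = (1 + x) ^ n - 1 := by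
  rw [add_comm 1 x, add_pow, sum_range_eq_add_Ico _ (by omega : 0 < n + 1), Ico_add_one_right_eq_Icc]
  simp

section

variable {K : Type*} [Field K] [CharZero K]

lemma pow_div_mul_choose_succ (x : K) {n k : ℕ} (hk : 1 ≤ k) (hkn : k ≤ n + 1) :
    x ^ k / k * (n + 1).choose k
      = x ^ k / k * n.choose k + x ^ k * (n + 1).choose k / (n + 1) := by
  have hchoose : (n.choose k : K) * (n + 1) = (n + 1).choose k * (n + 1 - k) := by
    exact_mod_cast Nat.choose_mul_succ_eq n k
  have hk0 : (k : K) ≠ 0 := Nat.cast_ne_zero.mpr (by omega)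
  have hn0 : (n : K) + 1 ≠ 0 := by exact_mod_cast n.succ_ne_zero
  field_simp
  linear_combination (-x ^ k) * hchoose

theorem sum_Icc_pow_div_mul_choose (x : K) (n : ℕ) :
    ∑ k ∈ Icc 1 n, x ^ k / k * n.choose k = ∑ j ∈ Icc 1 n, ((1 + x) ^ j - 1) / j := by
  induction n with
  | zero => simp
  | succ n ih =>
    have hsplit : ∑ k ∈ Icc 1 (n + 1), x ^ k / k * (n + 1).choose k
        = ∑ k ∈ Icc 1 (n + 1), x ^ k / k * n.choose k
          + (∑ k ∈ Icc 1 (n + 1), x ^ k * (n + 1).choose k) / (n + 1) := by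
      rw [sum_div, ← sum_add_distrib]
      refine sum_congr rfl fun k hk => ?_
      rw [mem_Icc] at hk
      exact pow_div_mul_choose_succ x hk.1 hk.2
    rw [hsplit, sum_Icc_one_pow_mul_choose, sum_Icc_succ_top (by omega),
      Nat.choose_succ_self, ih, sum_Icc_succ_top (by omega)]
    push_cast
    ring

end

theorem sum_Icc_neg_one_pow_sub_one_div (n : ℕ) :
    ∑ j ∈ Icc 1 n, ((-1 : ℚ) ^ j - 1) / j = H (n / 2) - 2 * H n := by
  induction n with
  | zero => simp [H]
  | succ n ih =>
    rw [sum_Icc_succ_top (by omega), ih, H_succ n]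
    rcases Nat.even_or_odd' n with ⟨i, rfl | rfl⟩
    · have hdiv : (2 * i + 1) / 2 = 2 * i / 2 := by omega
      rw [hdiv, pow_succ, (even_two_mul i).neg_one_pow]
      push_cast
      ring
    · have hdiv : (2 * i + 1 + 1) / 2 = i + 1 := by omega
      have hdiv' : (2 * i + 1) / 2 = i := by omega
      have hi : (i : ℚ) + 1 ≠ 0 := by positivity
      rw [hdiv, hdiv', H_succ i, show 2 * i + 1 + 1 = 2 * (i + 1) by ring,
        (even_two_mul _).neg_one_pow]
      field_simp
      push_cast
      ring

theorem stmt1_general (n : ℕ) (hodd : Odd n) :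
    ∑ k ∈ Finset.Icc 1 (n - 1), ((-2 : ℚ) ^ k / k) * (n.choose k)
      = -2 * H (n - 1) + H ((n - 1) / 2) + ((2 : ℚ) ^ n - 2) / n := by
  obtain ⟨m, rfl⟩ := hodd
  have hfull := sum_Icc_pow_div_mul_choose (-2 : ℚ) (2 * m + 1)
  rw [sum_Icc_succ_top (by omega), Nat.choose_self, show (1 : ℚ) + -2 = -1 by norm_num,
    sum_Icc_neg_one_pow_sub_one_div, H_succ, Odd.neg_pow ⟨m, rfl⟩] at hfull
  rw [show (2 * m + 1) / 2 = m by omega] at hfull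
  rw [show 2 * m + 1 - 1 = 2 * m by omega, show 2 * m / 2 = m by omega]
  push_cast at hfull ⊢
  linear_combination hfull

theorem stmt1 (n : ℕ) (hn : 0 < n) (hodd : Odd n) :
    ∑ k ∈ Finset.Icc 1 (n - 1), ((-2 : ℚ) ^ k / k) * (n.choose k)
      = -2 * H (n - 1) + H ((n - 1) / 2) + ((2 : ℚ) ^ n - 2) / n :=
  stmt1_general n hodd
end

section
/- For any positive integer n and any real (or rational) x, the sum over k from 1 to n of ((-x)^k / k)·C(n, k) equals the sum over k from 1 to n of ((1-x)^k - 1)/k. -/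
/-!
Write `y = -x`. Both sides vanish for `n = 0`. Passing from `n` to `n + 1`, Pascal's rule
makes the left side grow by `∑ₖ yᵏ⁺¹/(k+1) · C(n, k)`, which by `(n+1) C(n, k) = (k+1) C(n+1, k+1)`
and the binomial theorem is `((1 + y)ⁿ⁺¹ - 1)/(n + 1)` (the integral of `(1 + t)ⁿ` over `[0, y]`),
exactly the new term on the right.
-/

open Finset

section

variable {K : Type*} [Field K] [CharZero K]

theorem sum_range_pow_succ_div_mul_choose (n : ℕ) (y : K) :
    ∑ k ∈ range (n + 1), y ^ (k + 1) / (k + 1) * n.choose k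
      = ((1 + y) ^ (n + 1) - 1) / (n + 1) := by
  have hterm : ∀ k ∈ range (n + 1),
      y ^ (k + 1) / (k + 1) * n.choose k = y ^ (k + 1) * (n + 1).choose (k + 1) / (n + 1) := by
    intro k _
    have h : ((n + 1 : ℕ) : K) * n.choose k = (n + 1).choose (k + 1) * (k + 1 : ℕ) := by
      exact_mod_cast Nat.add_one_mul_choose_eq n k
    push_cast at h
    field_simp
    linear_combination y ^ (k + 1) * h
  rw [sum_congr rfl hterm, ← sum_div, add_comm 1 y, add_pow, sum_range_succ' _ (n + 1)]
  simp

theorem sum_range_pow_succ_div_mul_choose_succ (n : ℕ) (y : K) :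
    ∑ k ∈ range n, y ^ (k + 1) / (k + 1) * n.choose (k + 1)
      = ∑ k ∈ range n, ((1 + y) ^ (k + 1) - 1) / (k + 1) := by
  induction n with
  | zero => simp
  | succ n ih =>
    simp_rw [Nat.choose_succ_succ', Nat.cast_add, mul_add, sum_add_distrib,
      sum_range_pow_succ_div_mul_choose, sum_range_succ _ n, ih, Nat.choose_succ_self]
    simp only [Nat.cast_zero, mul_zero, add_zero]
    ring

end

theorem stmt3_general (n : ℕ) (x : ℚ) :
    ∑ k ∈ Finset.Icc 1 n, ((-x) ^ k / k) * (n.choose k)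
      = ∑ k ∈ Finset.Icc 1 n, ((1 - x) ^ k - 1) / k := by
  have h := sum_range_pow_succ_div_mul_choose_succ n (-x)
  rw [← sub_eq_add_neg] at h
  simpa only [← Ico_add_one_right_eq_Icc, sum_Ico_eq_sum_range, Nat.add_sub_cancel, add_comm 1,
    Nat.cast_add, Nat.cast_one] using h

theorem stmt3 (n : ℕ) (hn : 0 < n) (x : ℚ) :
    ∑ k ∈ Finset.Icc 1 n, ((-x) ^ k / k) * (n.choose k)
      = ∑ k ∈ Finset.Icc 1 n, ((1 - x) ^ k - 1) / k :=
  stmt3_general n x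
end

section
/- For any even positive integer n, the sum over k from 1 to n-1 of ((-2)^{k-1} / k)·C(n, k-1) equals ((n-1)·2^{n-1} + 1)/(n+1). -/
/-!
Since `C(n, k-1) / k = C(n+1, k) / (n+1)`, the sum is `1/(n+1)` times the truncated binomial sum
`∑_{k=1}^{n-1} (-2)^(k-1) C(n+1, k)`. Over all `1 ≤ k ≤ n+1` that sum is
`((-2 + 1)^(n+1) - 1) / (-2) = 1` because `n+1` is odd, and removing the two top terms
`k = n, n+1` leaves `(n-1) 2^(n-1) + 1`.
-/

open Finset

theorem mul_sum_range_pow_mul_choose_succ {R : Type*} [CommRing R] (x : R) (N : ℕ) :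
    x * ∑ i ∈ range N, x ^ i * N.choose (i + 1) = (x + 1) ^ N - 1 := by
  rw [add_pow, sum_range_succ', mul_sum]
  simp [pow_succ, mul_assoc, mul_comm]

theorem choose_div_succ_eq {K : Type*} [Field K] [CharZero K] (n k : ℕ) :
    (n.choose k : K) / (k + 1) = (n + 1).choose (k + 1) / (n + 1) := by
  rw [div_eq_div_iff (Nat.cast_add_one_ne_zero k) (Nat.cast_add_one_ne_zero n)]
  exact_mod_cast (mul_comm _ _).trans (Nat.add_one_mul_choose_eq n k)

theorem sum_Icc_pow_div_mul_choose_pred {K : Type*} [Field K] [CharZero K] (x : K) (n : ℕ) :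
    ∑ k ∈ Icc 1 (n - 1), x ^ (k - 1) / k * n.choose (k - 1)
      = (∑ i ∈ range (n - 1), x ^ i * (n + 1).choose (i + 1)) / (n + 1) := by
  rw [show Icc 1 (n - 1) = Ico 1 n by ext; simp; omega, sum_Ico_eq_sum_range, sum_div]
  refine sum_congr rfl fun i _ => ?_
  rw [add_tsub_cancel_left, mul_div_assoc, ← choose_div_succ_eq]
  push_cast
  ring

theorem sum_range_neg_two_pow_mul_choose_succ {n : ℕ} (hn : Even n) :
    ∑ i ∈ range (n - 1), (-2 : ℚ) ^ i * (n + 1).choose (i + 1) = (n - 1) * 2 ^ (n - 1) + 1 := by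
  rcases n with _ | m
  · simp
  have hm : Odd m := by simpa [Nat.even_add_one] using hn
  have hfull := mul_sum_range_pow_mul_choose_succ (-2 : ℚ) (m + 2)
  rw [sum_range_succ, sum_range_succ, Nat.choose_succ_self_right, Nat.choose_self,
    hm.neg_pow, hm.add_one.neg_pow, show (-2 : ℚ) + 1 = -1 by norm_num,
    (hm.add_even even_two).neg_one_pow] at hfull
  simp only [add_tsub_cancel_right]
  push_cast at hfull ⊢
  linear_combination (-1/2 : ℚ) * hfull

theorem stmt5_general (n : ℕ) (heven : Even n) :
    ∑ k ∈ Finset.Icc 1 (n - 1), ((-2 : ℚ) ^ (k - 1) / k) * (n.choose (k - 1))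
      = (((n : ℚ) - 1) * 2 ^ (n - 1) + 1) / (n + 1) := by
  rw [sum_Icc_pow_div_mul_choose_pred, sum_range_neg_two_pow_mul_choose_succ heven]

theorem stmt5 (n : ℕ) (hn : 0 < n) (heven : Even n) :
    ∑ k ∈ Finset.Icc 1 (n - 1), ((-2 : ℚ) ^ (k - 1) / k) * (n.choose (k - 1))
      = (((n : ℚ) - 1) * 2 ^ (n - 1) + 1) / (n + 1) :=
  stmt5_general n heven
end

section
/- For every positive integer n, (-1)^n · ∑_{k=1}^{n-1} (-1)^{k-1} C(n,k) 2^k H_k = (2^n - 2)·H_{n-1} + H_{⌊n/2⌋} + (2^n - 2)/n. -/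
open Finset

theorem H_eq_harmonic (n : ℕ) : H n = harmonic n := by
  simp only [H, harmonic_eq_sum_Icc, one_div]

theorem sum_range_add_two_eq {M : Type*} [AddCommMonoid M] (f : ℕ → M) (m : ℕ) :
    ∑ k ∈ range (m + 2), f k = f 0 + ∑ k ∈ Icc 1 m, f k + f (m + 1) := by
  rw [sum_range_succ, sum_range_succ', ← Ico_add_one_right_eq_Icc, sum_Ico_eq_sum_range,
    add_comm (f 0)]
  simp only [add_tsub_cancel_right, add_comm 1]

theorem sum_range_succ_choose_smul {M : Type*} [AddCommMonoid M] (f : ℕ → M) (n : ℕ) :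
    ∑ k ∈ range (n + 2), (n + 1).choose k • f k
      = ∑ k ∈ range (n + 1), n.choose k • (f k + f (k + 1)) := by
  rw [sum_range_succ', Nat.choose_zero_right]
  simp only [Nat.choose_succ_succ', add_smul, sum_add_distrib, smul_add]
  rw [sum_range_succ (fun k => n.choose (k + 1) • f (k + 1)), Nat.choose_succ_self, zero_smul,
    add_zero, sum_range_succ' (fun k => n.choose k • f k), Nat.choose_zero_right]
  abel

theorem sum_range_choose_mul_pow_succ_div {K : Type*} [Field K] [CharZero K] (x : K) (n : ℕ) :
    ∑ k ∈ range (n + 1), (n.choose k : K) * x ^ (k + 1) / (k + 1)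
      = ((1 + x) ^ (n + 1) - 1) / (n + 1) := by
  have hchoose (k : ℕ) : (n.choose k : K) / (k + 1) = (n + 1).choose (k + 1) / (n + 1) := by
    rw [div_eq_div_iff (Nat.cast_add_one_ne_zero k) (Nat.cast_add_one_ne_zero n), mul_comm]
    exact_mod_cast Nat.add_one_mul_choose_eq n k
  have hbinom : (1 + x) ^ (n + 1)
      = ∑ k ∈ range (n + 1), ((n + 1).choose (k + 1) : K) * x ^ (k + 1) + 1 := by
    rw [add_comm, add_pow, sum_range_succ']
    simp [mul_comm]
  rw [hbinom, add_sub_cancel_right, sum_div]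
  refine sum_congr rfl fun k _ => ?_
  rw [mul_div_right_comm, hchoose, div_mul_eq_mul_div]

noncomputable def binomHarmonicSum (x : ℚ) (n : ℕ) : ℚ :=
  ∑ k ∈ range (n + 1), n.choose k * x ^ k * harmonic k

theorem binomHarmonicSum_succ (x : ℚ) (n : ℕ) :
    binomHarmonicSum x (n + 1)
      = (1 + x) * binomHarmonicSum x n + ((1 + x) ^ (n + 1) - 1) / (n + 1) := by
  have hsmul (m : ℕ) : binomHarmonicSum x m
      = ∑ k ∈ range (m + 1), m.choose k • (x ^ k * harmonic k) := by
    simp only [binomHarmonicSum, nsmul_eq_mul, mul_assoc]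
  have hterm (k : ℕ) : x ^ k * harmonic k + x ^ (k + 1) * harmonic (k + 1)
      = (1 + x) * (x ^ k * harmonic k) + x ^ (k + 1) / (k + 1) := by
    rw [harmonic_succ]; push_cast; ring
  rw [hsmul, hsmul, sum_range_succ_choose_smul, ← sum_range_choose_mul_pow_succ_div, mul_sum]
  simp only [hterm, smul_add, sum_add_distrib, nsmul_eq_mul]
  congr 1 <;> refine sum_congr rfl fun k _ => by ring

theorem two_mul_harmonic_sub_harmonic_half_succ (n : ℕ) :
    2 * harmonic (n + 1) - harmonic ((n + 1) / 2)
      = 2 * harmonic n - harmonic (n / 2) + (1 + (-1) ^ n) / (n + 1) := by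
  rw [harmonic_succ]
  rcases Nat.even_or_odd' n with ⟨t, rfl | rfl⟩
  · rw [show (2 * t + 1) / 2 = 2 * t / 2 by omega, Even.neg_one_pow ⟨t, by ring⟩]
    push_cast; ring
  · rw [show (2 * t + 1 + 1) / 2 = t + 1 by omega, show (2 * t + 1) / 2 = t by omega,
      harmonic_succ t, Odd.neg_one_pow ⟨t, rfl⟩]
    push_cast; field_simp; ring

theorem neg_one_pow_sq (n : ℕ) : ((-1 : ℚ) ^ n) ^ 2 = 1 := by
  rw [← pow_mul, pow_mul', neg_one_sq, one_pow]

theorem binomHarmonicSum_neg_two (n : ℕ) :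
    binomHarmonicSum (-2) n = (-1) ^ n * (2 * harmonic n - harmonic (n / 2)) := by
  induction n with
  | zero => simp [binomHarmonicSum]
  | succ n ih =>
    rw [binomHarmonicSum_succ, ih, two_mul_harmonic_sub_harmonic_half_succ,
      show (1 : ℚ) + -2 = -1 by norm_num]
    linear_combination neg_one_pow_sq n / (n + 1)

theorem sum_Icc_neg_one_pow_choose_two_pow_harmonic (m : ℕ) :
    ∑ k ∈ Icc 1 m, (-1 : ℚ) ^ (k - 1) * ((m + 1).choose k) * 2 ^ k * harmonic k
      = (-2) ^ (m + 1) * harmonic (m + 1) - binomHarmonicSum (-2) (m + 1) := by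
  have hterm : ∀ k ∈ Icc 1 m, (-1 : ℚ) ^ (k - 1) * ((m + 1).choose k) * 2 ^ k * harmonic k
      = -(((m + 1).choose k) * (-2) ^ k * harmonic k) := by
    intro k hk
    obtain ⟨j, rfl⟩ := Nat.exists_eq_add_one_of_ne_zero (by simp at hk; omega : k ≠ 0)
    rw [neg_pow (2 : ℚ), add_tsub_cancel_right]
    ring
  rw [binomHarmonicSum, sum_range_add_two_eq, sum_congr rfl hterm, sum_neg_distrib]
  simp only [Nat.choose_zero_right, Nat.choose_self, harmonic_zero, mul_zero, zero_add]
  ring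

theorem stmt6 (n : ℕ) (hn : 0 < n) :
    (-1 : ℚ) ^ n * ∑ k ∈ Finset.Icc 1 (n - 1), (-1 : ℚ) ^ (k - 1) * (n.choose k) * 2 ^ k * H k
      = ((2 : ℚ) ^ n - 2) * H (n - 1) + H (n / 2) + ((2 : ℚ) ^ n - 2) / n := by
  obtain ⟨m, rfl⟩ := Nat.exists_eq_add_one_of_ne_zero hn.ne'
  simp only [H_eq_harmonic, add_tsub_cancel_right]
  rw [sum_Icc_neg_one_pow_choose_two_pow_harmonic, binomHarmonicSum_neg_two, harmonic_succ,
    neg_pow (2 : ℚ)]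
  linear_combination
    ((2 ^ (m + 1) - 2) * (harmonic m + (↑(m + 1))⁻¹) + harmonic ((m + 1) / 2)) *
      neg_one_pow_sq (m + 1)
end

section
/- Let p > 3 be a prime. Then ∑_{k=1}^{p-1} (1/k²)·C(p-1, k) ≡ (3p/4)·B_{p-3} (mod p²). -/
/-!
Modulo `p²`, `C(p-1, k) ≡ (-1)^k (1 - p H_k)` with `H_k` the harmonic numbers, so the sum is
`S₁ - p S₂` with `S₁ = ∑ (-1)^k / k²` and `S₂ = ∑ (-1)^k H_k / k²`. Pairing `k` with `p - k` gives
`S₁ ≡ -(p/4) T (mod p²)` and `2 S₂ ≡ ∑ (-1)^k / k³ = T/4 - ∑ 1/k³ ≡ T/4 (mod p)`, where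
`T = ∑_{j ≤ (p-1)/2} 1/j³`. Finally `T ≡ ∑_{j ≤ (p-1)/2} j^(p-4) ≡ -2 B_{p-3} (mod p)` by Fermat,
Faulhaber's formula and `B_n(1/2) = (2^(1-n) - 1) B_n`. Congruences modulo `p^n` are expressed as
membership in `p^n ℤ_p ⊂ ℚ_p`.
-/

open Finset

namespace ChooseInvSqCongr

section Reindexing

variable {M : Type*} [AddCommMonoid M]

theorem sum_Icc_reflect (n : ℕ) (f : ℕ → M) :
    ∑ k ∈ Icc 1 (n - 1), f (n - k) = ∑ k ∈ Icc 1 (n - 1), f k := by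
  refine sum_nbij' (n - ·) (n - ·) ?_ ?_ ?_ ?_ ?_ <;> intro a ha <;>
    simp only [mem_Icc] at ha ⊢
  all_goals omega

theorem sum_Icc_eq_sum_even_add_odd {n m : ℕ} (hn : n = 2 * m + 1) (f : ℕ → M) :
    ∑ k ∈ Icc 1 (n - 1), f k = ∑ j ∈ Icc 1 m, (f (2 * j) + f (n - 2 * j)) := by
  rw [sum_add_distrib, ← sum_filter_add_sum_filter_not (Icc 1 (n - 1)) (fun k => Even k)]
  congr 1
  · refine sum_nbij' (· / 2) (2 * ·) ?_ ?_ ?_ ?_ ?_ <;> intro a ha <;>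
      simp only [mem_filter, mem_Icc, Nat.even_iff] at ha ⊢
    all_goals first | omega | (congr 1; omega)
  · refine sum_nbij' (fun k => (n - k) / 2) (n - 2 * ·) ?_ ?_ ?_ ?_ ?_ <;> intro a ha <;>
      simp only [mem_filter, mem_Icc, Nat.even_iff] at ha ⊢
    all_goals first | omega | (congr 1; omega)

end Reindexing

variable {p : ℕ} [Fact p.Prime]

/-- `p ^ n ℤ_[p]`, the closed ball of radius `p ^ (-n)` in `ℚ_[p]`. -/
def pBall (p : ℕ) [Fact p.Prime] (n : ℕ) : AddSubgroup ℚ_[p] where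
  carrier := {x | ‖x‖ ≤ (p : ℝ)⁻¹ ^ n}
  add_mem' hx hy := (IsUltrametricDist.norm_add_le_max _ _).trans (max_le hx hy)
  zero_mem' := show ‖(0 : ℚ_[p])‖ ≤ _ by rw [norm_zero]; positivity
  neg_mem' := by simp

theorem mem_pBall {n : ℕ} {x : ℚ_[p]} : x ∈ pBall p n ↔ ‖x‖ ≤ (p : ℝ)⁻¹ ^ n := Iff.rfl

theorem mem_pBall_zero {x : ℚ_[p]} : x ∈ pBall p 0 ↔ x ∈ PadicInt.subring p := by
  rw [mem_pBall, PadicInt.mem_subring_iff, pow_zero]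

theorem pBall_antitone {m n : ℕ} (h : m ≤ n) : pBall p n ≤ pBall p m := fun _ hx =>
  mem_pBall.2 <| (mem_pBall.1 hx).trans <| pow_le_pow_of_le_one (inv_nonneg.2 p.cast_nonneg)
    (inv_le_one_of_one_le₀ (Nat.one_le_cast.2 (Fact.out : p.Prime).one_le)) h

theorem mul_mem_pBall {m n : ℕ} {x y : ℚ_[p]} (hx : x ∈ pBall p m) (hy : y ∈ pBall p n) :
    x * y ∈ pBall p (m + n) := by
  rw [mem_pBall, norm_mul, pow_add]
  exact mul_le_mul hx hy (norm_nonneg _) (by positivity)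

theorem mul_mem_pBall_of_mem_subring {n : ℕ} {x y : ℚ_[p]} (hx : x ∈ pBall p n)
    (hy : y ∈ PadicInt.subring p) : x * y ∈ pBall p n :=
  mul_mem_pBall hx (mem_pBall_zero.2 hy)

theorem p_mem_pBall_one : (p : ℚ_[p]) ∈ pBall p 1 := by
  rw [mem_pBall, Padic.norm_p, pow_one]

theorem p_pow_mul_mem_pBall (n : ℕ) {x : ℚ_[p]} (hx : x ∈ PadicInt.subring p) :
    (p : ℚ_[p]) ^ n * x ∈ pBall p n := by
  rw [mem_pBall, norm_mul, norm_pow, Padic.norm_p]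
  exact mul_le_of_le_one_right (by positivity) hx

theorem mem_pBall_of_mul_left {n : ℕ} {u x : ℚ_[p]} (hu : ‖u‖ = 1) (h : u * x ∈ pBall p n) :
    x ∈ pBall p n := by
  rwa [mem_pBall, norm_mul, hu, one_mul] at h

theorem intCast_mem_pBall_iff {n : ℕ} {z : ℤ} : (z : ℚ_[p]) ∈ pBall p n ↔ (p : ℤ) ^ n ∣ z := by
  rw [mem_pBall, ← Padic.norm_int_le_pow_iff_dvd, zpow_neg, zpow_natCast, inv_pow]

theorem intCast_pow_sub_mem_pBall_one (a : ℤ) : (a : ℚ_[p]) ^ p - a ∈ pBall p 1 := by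
  have h : (((a ^ p - a : ℤ)) : ℚ_[p]) ∈ pBall p 1 := by
    rw [intCast_mem_pBall_iff, pow_one, ← ZMod.intCast_zmod_eq_zero_iff_dvd]
    push_cast
    rw [ZMod.pow_card, sub_self]
  exact_mod_cast h

theorem norm_natCast_eq_one {k : ℕ} (h0 : 0 < k) (hk : k < p) : ‖(k : ℚ_[p])‖ = 1 :=
  Padic.norm_natCast_eq_one_iff.2 <|
    Nat.coprime_of_lt_prime h0.ne' hk Fact.out

theorem norm_two_eq_one (hp : 2 < p) : ‖(2 : ℚ_[p])‖ = 1 := by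
  simpa using norm_natCast_eq_one (p := p) two_pos hp

theorem inv_two_mem_subring (hp : 2 < p) : (2 : ℚ_[p])⁻¹ ∈ PadicInt.subring p := by
  rw [PadicInt.mem_subring_iff, norm_inv, norm_two_eq_one hp, inv_one]

theorem inv_natCast_mem_subring {k : ℕ} (h0 : 0 < k) (hk : k < p) :
    (k : ℚ_[p])⁻¹ ∈ PadicInt.subring p := by
  rw [PadicInt.mem_subring_iff, norm_inv, norm_natCast_eq_one h0 hk, inv_one]

theorem inv_natCast_pow_mem_subring {k : ℕ} (h0 : 0 < k) (hk : k < p) (r : ℕ) :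
    ((k : ℚ_[p]) ^ r)⁻¹ ∈ PadicInt.subring p := by
  rw [← inv_pow]
  exact pow_mem (inv_natCast_mem_subring h0 hk) r

theorem pow_sub_pow_mem_pBall {n : ℕ} {x y : ℚ_[p]} (hx : x ∈ PadicInt.subring p)
    (hy : y ∈ PadicInt.subring p) (hxy : x - y ∈ pBall p n) (a : ℕ) :
    x ^ a - y ^ a ∈ pBall p n := by
  rw [← geom_sum₂_mul, mul_comm]
  exact mul_mem_pBall_of_mem_subring hxy <|
    sum_mem fun i _ => mul_mem (pow_mem hx _) (pow_mem hy _)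

theorem eq_zero_or_le_padicValRat {n : ℕ} {q : ℚ} (hq : (q : ℚ_[p]) ∈ pBall p n) :
    q = 0 ∨ (n : ℤ) ≤ padicValRat p q := by
  refine or_iff_not_imp_left.2 fun h0 => ?_
  rw [mem_pBall, Padic.norm_eq_zpow_neg_valuation (by exact_mod_cast h0), Padic.valuation_ratCast,
    ← zpow_natCast, inv_zpow', zpow_le_zpow_iff_right₀ (mod_cast (Fact.out : p.Prime).one_lt)] at hq
  omega

theorem inv_pow_add_inv_pow_mem_pBall_one {r a : ℕ} (hr : Odd r) (h0 : 0 < a) (ha : a < p) :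
    (((p - a : ℕ) : ℚ_[p]) ^ r)⁻¹ + ((a : ℚ_[p]) ^ r)⁻¹ ∈ pBall p 1 := by
  have hsum : (((a ^ r + (p - a) ^ r : ℕ) : ℤ) : ℚ_[p]) ∈ pBall p 1 := by
    rw [intCast_mem_pBall_iff, pow_one]
    have h := Odd.add_dvd_pow_add_pow (a : ℤ) ((p - a : ℕ) : ℤ) hr
    rwa [← Nat.cast_add, Nat.add_sub_cancel' ha.le] at h
  have ha0 : (a : ℚ_[p]) ≠ 0 := Nat.cast_ne_zero.2 h0.ne'
  have hb0 : ((p - a : ℕ) : ℚ_[p]) ≠ 0 := Nat.cast_ne_zero.2 (by omega)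
  have hab : (((p - a : ℕ) : ℚ_[p]) ^ r)⁻¹ + ((a : ℚ_[p]) ^ r)⁻¹
      = (((a ^ r + (p - a) ^ r : ℕ) : ℤ) : ℚ_[p])
        * ((a : ℚ_[p]) ^ r * ((p - a : ℕ) : ℚ_[p]) ^ r)⁻¹ := by
    push_cast
    field_simp
  rw [hab, mul_inv, ← inv_pow, ← inv_pow]
  exact mul_mem_pBall_of_mem_subring hsum <|
    mul_mem (pow_mem (inv_natCast_mem_subring h0 ha) r)
      (pow_mem (inv_natCast_mem_subring (by omega) (by omega)) r)

theorem sum_inv_pow_mem_pBall_one (hp : Odd p) {r : ℕ} (hr : Odd r) :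
    ∑ k ∈ Icc 1 (p - 1), ((k : ℚ_[p]) ^ r)⁻¹ ∈ pBall p 1 := by
  obtain ⟨m, hm⟩ := hp
  rw [sum_Icc_eq_sum_even_add_odd hm]
  refine sum_mem fun j hj => ?_
  rw [mem_Icc] at hj
  rw [add_comm]
  exact inv_pow_add_inv_pow_mem_pBall_one hr (by omega) (by omega)

theorem inv_natCast_sub_add_inv_mem_pBall_one {a : ℕ} (h0 : 0 < a) (ha : a < p) :
    ((p - a : ℕ) : ℚ_[p])⁻¹ + (a : ℚ_[p])⁻¹ ∈ pBall p 1 := by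
  simpa using inv_pow_add_inv_pow_mem_pBall_one odd_one h0 ha

theorem harmonic_mem_subring {k : ℕ} (hk : k < p) :
    (harmonic k : ℚ_[p]) ∈ PadicInt.subring p := by
  rw [harmonic_eq_sum_Icc]
  push_cast
  exact sum_mem fun j hj => by
    rw [mem_Icc] at hj
    exact inv_natCast_mem_subring (by omega) (by omega)

theorem harmonic_sub_reflect_mem_pBall_one (hp : Odd p) {k : ℕ} (hk1 : 1 ≤ k) (hk : k ≤ p) :
    (harmonic (p - k) : ℚ_[p]) - harmonic (k - 1) ∈ pBall p 1 := by
  induction k, hk1 using Nat.le_induction with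
  | base =>
    rw [Nat.sub_self, harmonic_zero, Rat.cast_zero, sub_zero, harmonic_eq_sum_Icc]
    push_cast
    simpa using sum_inv_pow_mem_pBall_one hp odd_one
  | succ k hk1 ih =>
    have e1 : harmonic (p - k) = harmonic (p - (k + 1)) + ((p - k : ℕ) : ℚ)⁻¹ := by
      have h := harmonic_succ (p - (k + 1))
      rwa [show p - (k + 1) + 1 = p - k by omega] at h
    have e2 : harmonic k = harmonic (k - 1) + (k : ℚ)⁻¹ := by
      have h := harmonic_succ (k - 1)
      rwa [Nat.sub_add_cancel hk1] at h
    have step : (harmonic (p - (k + 1)) : ℚ_[p]) - harmonic (k + 1 - 1)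
        = (harmonic (p - k) - harmonic (k - 1)) - (((p - k : ℕ) : ℚ_[p])⁻¹ + (k : ℚ_[p])⁻¹) := by
      rw [Nat.add_sub_cancel, e1, e2]
      push_cast
      ring
    rw [step]
    exact sub_mem (ih (by omega)) (inv_natCast_sub_add_inv_mem_pBall_one (by omega) (by omega))

theorem choose_sub_one_sub_mem_pBall_two {k : ℕ} (hk : k < p) :
    ((p - 1).choose k : ℚ_[p]) - (-1) ^ k * (1 - p * harmonic k) ∈ pBall p 2 := by
  induction k with
  | zero => simp
  | succ k ih =>
    set u : ℚ_[p] := ((k + 1 : ℕ) : ℚ_[p])⁻¹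
    have hrec : ((p - 1).choose (k + 1) : ℚ_[p]) = -((p - 1).choose k) * (1 - p * u) := by
      have h : (((p - 1).choose (k + 1) * (k + 1) : ℕ) : ℚ_[p])
          = (((p - 1).choose k * (p - 1 - k) : ℕ) : ℚ_[p]) :=
        congrArg Nat.cast (Nat.choose_succ_right_eq (p - 1) k)
      have hk0 : ((k + 1 : ℕ) : ℚ_[p]) ≠ 0 := Nat.cast_ne_zero.2 k.succ_ne_zero
      rw [Nat.cast_mul, Nat.cast_mul, Nat.cast_sub (by omega), Nat.cast_sub (by omega)] at h
      simp only [u]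
      field_simp
      push_cast at h ⊢
      linear_combination h
    have key : ((p - 1).choose (k + 1) : ℚ_[p]) - (-1) ^ (k + 1) * (1 - p * harmonic (k + 1))
        = -((((p - 1).choose k : ℚ_[p]) - (-1) ^ k * (1 - p * harmonic k)) * (1 - p * u))
          + p ^ 2 * ((-1) ^ (k + 1) * harmonic k * u) := by
      rw [hrec, harmonic_succ]
      push_cast [u]
      ring
    have hu : u ∈ PadicInt.subring p := inv_natCast_mem_subring (by omega) hk
    rw [key]
    refine add_mem (neg_mem (mul_mem_pBall_of_mem_subring (ih (by omega)) ?_))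
      (p_pow_mul_mem_pBall 2 ?_)
    · exact sub_mem (one_mem _) (mul_mem (natCast_mem _ p) hu)
    · exact mul_mem (mul_mem (pow_mem (neg_mem (one_mem _)) _)
        (harmonic_mem_subring (by omega))) hu

theorem sum_choose_mul_inv_sq_sub_mem_pBall_two :
    ∑ k ∈ Icc 1 (p - 1), ((p - 1).choose k : ℚ_[p]) * ((k : ℚ_[p]) ^ 2)⁻¹
      - (∑ k ∈ Icc 1 (p - 1), (-1) ^ k * ((k : ℚ_[p]) ^ 2)⁻¹
        - p * ∑ k ∈ Icc 1 (p - 1), (-1) ^ k * (harmonic k : ℚ_[p]) * ((k : ℚ_[p]) ^ 2)⁻¹)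
      ∈ pBall p 2 := by
  rw [mul_sum, ← sum_sub_distrib, ← sum_sub_distrib]
  refine sum_mem fun k hk => ?_
  rw [mem_Icc] at hk
  have key : ((p - 1).choose k : ℚ_[p]) * ((k : ℚ_[p]) ^ 2)⁻¹
        - ((-1) ^ k * ((k : ℚ_[p]) ^ 2)⁻¹ - p * ((-1) ^ k * harmonic k * ((k : ℚ_[p]) ^ 2)⁻¹))
      = (((p - 1).choose k : ℚ_[p]) - (-1) ^ k * (1 - p * harmonic k)) * ((k : ℚ_[p]) ^ 2)⁻¹ := by
    ring
  rw [key]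
  exact mul_mem_pBall_of_mem_subring (choose_sub_one_sub_mem_pBall_two (by omega))
    (inv_natCast_pow_mem_subring (by omega) (by omega) 2)

theorem inv_sq_reflect_sub_mem_pBall_two {a : ℕ} (h0 : 0 < a) (ha : a < p) :
    (((p - a : ℕ) : ℚ_[p]) ^ 2)⁻¹ - ((a : ℚ_[p]) ^ 2)⁻¹ - 2 * p * ((a : ℚ_[p]) ^ 3)⁻¹
      ∈ pBall p 2 := by
  have hp : (p : ℚ_[p]) = a + (p - a : ℕ) := by rw [Nat.cast_sub ha.le]; ring
  have ha0 : (a : ℚ_[p]) ≠ 0 := Nat.cast_ne_zero.2 h0.ne'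
  have hb0 : ((p - a : ℕ) : ℚ_[p]) ≠ 0 := Nat.cast_ne_zero.2 (by omega)
  -- with `b = p - a`: `1/b² - 1/a² - 2(a + b)/a³ = (a + b)² (a - 2b) / (a³ b²)`
  have key : (((p - a : ℕ) : ℚ_[p]) ^ 2)⁻¹ - ((a : ℚ_[p]) ^ 2)⁻¹ - 2 * p * ((a : ℚ_[p]) ^ 3)⁻¹
      = p ^ 2 * ((a - 2 * (p - a : ℕ))
        * (((a : ℚ_[p]) ^ 3)⁻¹ * (((p - a : ℕ) : ℚ_[p]) ^ 2)⁻¹)) := by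
    rw [hp]
    field_simp
    ring
  rw [key]
  exact p_pow_mul_mem_pBall 2 <| mul_mem
    (sub_mem (natCast_mem _ a) (mul_mem (natCast_mem _ 2) (natCast_mem _ _)))
    (mul_mem (inv_natCast_pow_mem_subring h0 ha 3)
      (inv_natCast_pow_mem_subring (by omega) (by omega) 2))

theorem inv_sq_reflect_sub_mem_pBall_one {a : ℕ} (h0 : 0 < a) (ha : a < p) :
    (((p - a : ℕ) : ℚ_[p]) ^ 2)⁻¹ - ((a : ℚ_[p]) ^ 2)⁻¹ ∈ pBall p 1 := by
  have h := add_mem (pBall_antitone one_le_two (inv_sq_reflect_sub_mem_pBall_two h0 ha))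
    (p_pow_mul_mem_pBall 1 (mul_mem (natCast_mem _ 2) (inv_natCast_pow_mem_subring h0 ha 3)))
  convert h using 1
  ring

theorem sum_neg_one_pow_mul_inv_sq_add_mem_pBall_two {m : ℕ} (hm : p = 2 * m + 1) :
    ∑ k ∈ Icc 1 (p - 1), (-1) ^ k * ((k : ℚ_[p]) ^ 2)⁻¹
      + p / 4 * ∑ j ∈ Icc 1 m, ((j : ℚ_[p]) ^ 3)⁻¹ ∈ pBall p 2 := by
  rw [sum_Icc_eq_sum_even_add_odd hm, mul_sum, ← sum_add_distrib]
  refine sum_mem fun j hj => ?_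
  rw [mem_Icc] at hj
  have hj0 : (j : ℚ_[p]) ≠ 0 := Nat.cast_ne_zero.2 (by omega)
  have heven : (-1 : ℚ_[p]) ^ (2 * j) = 1 := by rw [pow_mul, neg_one_sq, one_pow]
  have hodd : (-1 : ℚ_[p]) ^ (p - 2 * j) = -1 := Odd.neg_one_pow ⟨m - j, by omega⟩
  have hcube : (p : ℚ_[p]) / 4 * ((j : ℚ_[p]) ^ 3)⁻¹
      = 2 * p * (((2 * j : ℕ) : ℚ_[p]) ^ 3)⁻¹ := by
    push_cast
    field_simp
    ring
  rw [heven, hodd, hcube]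
  convert neg_mem (inv_sq_reflect_sub_mem_pBall_two (p := p) (a := 2 * j) (by omega) (by omega))
    using 1
  ring

theorem two_mul_sum_harmonic_sub_mem_pBall_one (hp : Odd p) :
    2 * ∑ k ∈ Icc 1 (p - 1), (-1) ^ k * (harmonic k : ℚ_[p]) * ((k : ℚ_[p]) ^ 2)⁻¹
      - ∑ k ∈ Icc 1 (p - 1), (-1) ^ k * ((k : ℚ_[p]) ^ 3)⁻¹ ∈ pBall p 1 := by
  have hreflect := sum_Icc_reflect p
    (fun k => (-1 : ℚ_[p]) ^ k * (harmonic k : ℚ_[p]) * ((k : ℚ_[p]) ^ 2)⁻¹)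
  rw [two_mul]
  nth_rw 2 [← hreflect]
  rw [← sum_add_distrib, ← sum_sub_distrib]
  refine sum_mem fun k hk => ?_
  rw [mem_Icc] at hk
  have hsign : (-1 : ℚ_[p]) ^ (p - k) = -(-1) ^ k := by
    have h := pow_add (-1 : ℚ_[p]) (p - k) k
    rw [Nat.sub_add_cancel (by omega), Odd.neg_one_pow hp] at h
    have hsq : ((-1 : ℚ_[p]) ^ k) ^ 2 = 1 := by rw [← pow_mul, pow_mul', neg_one_sq, one_pow]
    linear_combination (-(-1 : ℚ_[p]) ^ k) * h - (-1 : ℚ_[p]) ^ (p - k) * hsq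
  have hH : harmonic k = harmonic (k - 1) + (k : ℚ)⁻¹ := by
    have h := harmonic_succ (k - 1)
    rwa [Nat.sub_add_cancel hk.1] at h
  have key : (-1) ^ k * (harmonic k : ℚ_[p]) * ((k : ℚ_[p]) ^ 2)⁻¹
        + (-1) ^ (p - k) * (harmonic (p - k) : ℚ_[p]) * (((p - k : ℕ) : ℚ_[p]) ^ 2)⁻¹
        - (-1) ^ k * ((k : ℚ_[p]) ^ 3)⁻¹
      = (-(((harmonic (p - k) : ℚ_[p]) - harmonic (k - 1)) * (((p - k : ℕ) : ℚ_[p]) ^ 2)⁻¹)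
        - ((((p - k : ℕ) : ℚ_[p]) ^ 2)⁻¹ - ((k : ℚ_[p]) ^ 2)⁻¹) * harmonic (k - 1)) * (-1) ^ k := by
    rw [hsign, hH]
    push_cast
    ring
  rw [key]
  refine mul_mem_pBall_of_mem_subring (sub_mem (neg_mem ?_) ?_) (pow_mem (neg_mem (one_mem _)) k)
  · exact mul_mem_pBall_of_mem_subring (harmonic_sub_reflect_mem_pBall_one hp hk.1 (by omega))
      (inv_natCast_pow_mem_subring (by omega) (by omega) 2)
  · exact mul_mem_pBall_of_mem_subring (inv_sq_reflect_sub_mem_pBall_one (by omega) (by omega))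
      (harmonic_mem_subring (by omega))

theorem sum_neg_one_pow_mul_inv_cube {K : Type*} [Field K] [CharZero K] {n m : ℕ}
    (hn : n = 2 * m + 1) :
    ∑ k ∈ Icc 1 (n - 1), (-1) ^ k * ((k : K) ^ 3)⁻¹
      = (∑ j ∈ Icc 1 m, ((j : K) ^ 3)⁻¹) / 4 - ∑ k ∈ Icc 1 (n - 1), ((k : K) ^ 3)⁻¹ := by
  rw [eq_sub_iff_add_eq, sum_Icc_eq_sum_even_add_odd hn, sum_Icc_eq_sum_even_add_odd hn, sum_div,
    ← sum_add_distrib]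
  refine sum_congr rfl fun j hj => ?_
  rw [mem_Icc] at hj
  have hj0 : (j : K) ≠ 0 := Nat.cast_ne_zero.2 (by omega)
  have heven : (-1 : K) ^ (2 * j) = 1 := by rw [pow_mul, neg_one_sq, one_pow]
  have hodd : (-1 : K) ^ (n - 2 * j) = -1 := Odd.neg_one_pow ⟨m - j, by omega⟩
  rw [heven, hodd]
  push_cast
  field_simp
  ring

theorem bernoulli'_mem_subring {n : ℕ} (hn : n + 1 < p) :
    ((bernoulli' n : ℚ) : ℚ_[p]) ∈ PadicInt.subring p := by
  induction n using Nat.strong_induction_on with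
  | _ n ih =>
    rw [bernoulli'_def]
    push_cast
    refine sub_mem (one_mem _) (sum_mem fun k hk => ?_)
    rw [mem_range] at hk
    rw [show (n : ℚ_[p]) - k + 1 = ((n - k + 1 : ℕ) : ℚ_[p]) by
      push_cast [Nat.cast_sub hk.le]; ring, div_eq_mul_inv]
    exact mul_mem (mul_mem (natCast_mem _ _) (inv_natCast_mem_subring (by omega) (by omega)))
      (ih k hk (by omega))

theorem bernoulli_mem_subring {n : ℕ} (hn : n + 1 < p) :
    ((bernoulli n : ℚ) : ℚ_[p]) ∈ PadicInt.subring p := by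
  rw [bernoulli, Rat.cast_mul]
  push_cast
  exact mul_mem (pow_mem (neg_mem (one_mem _)) n) (bernoulli'_mem_subring hn)

open PowerSeries in
theorem bernoulli_eval_one_half (n : ℕ) :
    (Polynomial.bernoulli n).eval (1 / 2 : ℚ) = (2 / 2 ^ n - 1) * bernoulli n := by
  have hexp : exp ℚ - 1 ≠ 0 := fun h => by
    simpa [coeff_exp] using congrArg (coeff 1) h
  have hsq : exp ℚ = rescale (1 / 2 : ℚ) (exp ℚ) * rescale (1 / 2 : ℚ) (exp ℚ) := by
    rw [exp_mul_exp_eq_exp_add]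
    norm_num
  have hhalf : rescale (1 / 2 : ℚ) (bernoulliPowerSeries ℚ) * (rescale (1 / 2 : ℚ) (exp ℚ) - 1)
      = C (1 / 2) * X := by
    rw [← rescale_X, ← map_one (rescale (1 / 2 : ℚ)), ← map_sub, ← map_mul,
      bernoulliPowerSeries_mul_exp_sub_one]
  have hC : C (2 : ℚ) * C (1 / 2) = 1 := by rw [← map_mul]; norm_num
  -- `B(X/2) (e^(X/2) - 1) = X/2` gives the generating function of `Bₙ(1/2)` as `2 B(X/2) - B(X)`
  have key :
      mk (fun n => Polynomial.aeval (1 / 2 : ℚ) ((1 / n.factorial : ℚ) • Polynomial.bernoulli n))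
      = C 2 * rescale (1 / 2 : ℚ) (bernoulliPowerSeries ℚ) - bernoulliPowerSeries ℚ := by
    refine mul_right_cancel₀ hexp ?_
    rw [Polynomial.bernoulli_generating_function, sub_mul, bernoulliPowerSeries_mul_exp_sub_one]
    linear_combination -(C 2 * (rescale (1 / 2 : ℚ) (exp ℚ) + 1)) * hhalf
      - (X * (rescale (1 / 2 : ℚ) (exp ℚ) + 1)) * hC
      - (C 2 * rescale (1 / 2 : ℚ) (bernoulliPowerSeries ℚ)) * hsq
  have hn := congrArg (coeff n) key
  simp only [coeff_mk, map_sub, coeff_C_mul, coeff_rescale, bernoulliPowerSeries, map_smul,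
    smul_eq_mul, Polynomial.coe_aeval_eq_eval, Algebra.algebraMap_self, RingHom.id_apply] at hn
  have hfac : (n.factorial : ℚ) ≠ 0 := Nat.cast_ne_zero.2 n.factorial_ne_zero
  field_simp at hn
  rw [hn, one_div, inv_pow, div_eq_mul_inv]
  ring

theorem eval_sub_eval_mem_pBall {n : ℕ} (f : Polynomial ℚ)
    (hf : ∀ i, ((f.coeff i : ℚ) : ℚ_[p]) ∈ PadicInt.subring p) {x y : ℚ}
    (hx : (x : ℚ_[p]) ∈ PadicInt.subring p) (hy : (y : ℚ_[p]) ∈ PadicInt.subring p)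
    (hxy : (x : ℚ_[p]) - y ∈ pBall p n) :
    ((f.eval x : ℚ) : ℚ_[p]) - (f.eval y : ℚ) ∈ pBall p n := by
  rw [Polynomial.eval_eq_sum_range, Polynomial.eval_eq_sum_range]
  push_cast
  rw [← sum_sub_distrib]
  refine sum_mem fun i _ => ?_
  rw [← mul_sub, mul_comm]
  exact mul_mem_pBall_of_mem_subring (pow_sub_pow_mem_pBall hx hy hxy i) (hf i)

theorem bernoulli_eval_sub_eval_mem_pBall {n k : ℕ} (hn : n + 1 < p) {x y : ℚ}
    (hx : (x : ℚ_[p]) ∈ PadicInt.subring p) (hy : (y : ℚ_[p]) ∈ PadicInt.subring p)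
    (hxy : (x : ℚ_[p]) - y ∈ pBall p k) :
    (((Polynomial.bernoulli n).eval x : ℚ) : ℚ_[p]) - ((Polynomial.bernoulli n).eval y : ℚ)
      ∈ pBall p k := by
  refine eval_sub_eval_mem_pBall _ (fun i => ?_) hx hy hxy
  rw [Polynomial.coeff_bernoulli]
  split_ifs
  · push_cast
    exact mul_mem (bernoulli_mem_subring (by omega)) (natCast_mem _ _)
  · simp

theorem bernoulli_eval_succ_sub_eval_one_half_mem_pBall_one {m n : ℕ} (hm : p = 2 * m + 1)
    (hn : n + 1 < p) :
    (((Polynomial.bernoulli n).eval ((m + 1 : ℕ) : ℚ) : ℚ) : ℚ_[p])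
      - ((Polynomial.bernoulli n).eval (1 / 2) : ℚ) ∈ pBall p 1 := by
  have hhalf : (2 : ℚ_[p])⁻¹ ∈ PadicInt.subring p := inv_two_mem_subring (by omega)
  refine bernoulli_eval_sub_eval_mem_pBall hn (by rw [Rat.cast_natCast]; exact natCast_mem _ _)
    (by rwa [one_div, Rat.cast_inv, Rat.cast_ofNat]) ?_
  have h : (((m + 1 : ℕ) : ℚ) : ℚ_[p]) - ((1 / 2 : ℚ) : ℚ_[p]) = p * 2⁻¹ := by
    push_cast [hm]
    ring
  rw [h]
  exact mul_mem_pBall_of_mem_subring p_mem_pBall_one hhalf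

theorem sum_Icc_pow_eq_bernoulli_eval_sub {r : ℕ} (hr : r ≠ 0) (n : ℕ) :
    (r + 1 : ℚ) * ∑ j ∈ Icc 1 n, (j : ℚ) ^ r
      = (Polynomial.bernoulli (r + 1)).eval ((n + 1 : ℕ) : ℚ) - bernoulli (r + 1) := by
  have h := Polynomial.sum_range_pow_eq_bernoulli_sub (n + 1) r
  rwa [Nat.range_succ_eq_Icc_zero, ← insert_Icc_add_one_left_eq_Icc n.zero_le,
    sum_insert (by simp), Nat.cast_zero, zero_pow hr, zero_add, zero_add] at h

theorem sum_pow_add_two_mul_bernoulli_mem_pBall_one {m : ℕ} (hp5 : 5 ≤ p)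
    (hm : p = 2 * m + 1) :
    ∑ j ∈ Icc 1 m, (j : ℚ_[p]) ^ (p - 4) + 2 * (bernoulli (p - 3) : ℚ_[p]) ∈ pBall p 1 := by
  set B : ℚ_[p] := (bernoulli (p - 3) : ℚ_[p])
  set P : ℚ_[p] := ∑ j ∈ Icc 1 m, (j : ℚ_[p]) ^ (p - 4)
  set Qm : ℚ_[p] := (((Polynomial.bernoulli (p - 3)).eval ((m + 1 : ℕ) : ℚ) : ℚ) : ℚ_[p])
  set Qhalf : ℚ_[p] := (((Polynomial.bernoulli (p - 3)).eval (1 / 2) : ℚ) : ℚ_[p])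
  have h2 : ‖(2 : ℚ_[p])‖ = 1 := norm_two_eq_one (by omega)
  have hfaulhaber : ((p : ℚ_[p]) - 3) * P = Qm - B := by
    have h := congrArg (fun q : ℚ => (q : ℚ_[p]))
      (sum_Icc_pow_eq_bernoulli_eval_sub (r := p - 4) (by omega) m)
    rw [show p - 4 + 1 = p - 3 by omega, Nat.cast_sub (by omega)] at h
    simp only [Rat.cast_mul, Rat.cast_sub, Rat.cast_add, Rat.cast_sum, Rat.cast_pow,
      Rat.cast_natCast, Rat.cast_one] at h
    linear_combination h
  have hQhalf : (2 : ℚ_[p]) ^ (p - 3) * Qhalf = (2 - 2 ^ (p - 3)) * B := by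
    simp only [Qhalf, B, bernoulli_eval_one_half]
    push_cast
    field_simp
  have hQdiff : Qm - Qhalf ∈ pBall p 1 :=
    bernoulli_eval_succ_sub_eval_one_half_mem_pBall_one hm (by omega)
  have h2pow : (2 : ℚ_[p]) ^ p = 8 * 2 ^ (p - 3) := by
    rw [show (8 : ℚ_[p]) = 2 ^ 3 by norm_num, ← pow_add, Nat.add_sub_cancel' (by omega)]
  -- `P ≡ -2 B`: `(p - 3) P = B_{p-3}(m + 1) - B`, `m + 1 ≡ 1/2`, `B_{p-3}(1/2) = (2^(4-p) - 1) B`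
  -- and `2^(p-1) ≡ 1`
  have key : (2 : ℚ_[p]) ^ (p - 3) * (((p - 3 : ℕ) : ℚ_[p]) * (P + 2 * B))
      = (Qm - Qhalf) * 2 ^ (p - 3) - (((2 : ℤ) : ℚ_[p]) ^ p - (2 : ℤ)) * B
        + p * (2 * 2 ^ (p - 3) * B) := by
    push_cast [Nat.cast_sub (show 3 ≤ p by omega)]
    linear_combination (2 : ℚ_[p]) ^ (p - 3) * hfaulhaber + hQhalf + B * h2pow
  have hunit : ‖(2 : ℚ_[p]) ^ (p - 3) * ((p - 3 : ℕ) : ℚ_[p])‖ = 1 := by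
    rw [norm_mul, norm_pow, h2, one_pow, one_mul, norm_natCast_eq_one (by omega) (by omega)]
  have hB : B ∈ PadicInt.subring p := bernoulli_mem_subring (by omega)
  refine mem_pBall_of_mul_left hunit ?_
  rw [mul_assoc, key]
  refine add_mem (sub_mem (mul_mem_pBall_of_mem_subring hQdiff (pow_mem (natCast_mem _ 2) _))
    (mul_mem_pBall_of_mem_subring (intCast_pow_sub_mem_pBall_one 2) hB)) ?_
  exact mul_mem_pBall_of_mem_subring p_mem_pBall_one
    (mul_mem (mul_mem (natCast_mem _ 2) (pow_mem (natCast_mem _ 2) _)) hB)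

theorem inv_pow_sub_pow_mem_pBall_one {j r : ℕ} (h0 : 0 < j) (hj : j < p) (hr : r < p) :
    ((j : ℚ_[p]) ^ r)⁻¹ - (j : ℚ_[p]) ^ (p - 1 - r) ∈ pBall p 1 := by
  have hj0 : (j : ℚ_[p]) ≠ 0 := Nat.cast_ne_zero.2 h0.ne'
  refine mem_pBall_of_mul_left (u := (j : ℚ_[p]) ^ (r + 1))
    (by rw [norm_pow, norm_natCast_eq_one h0 hj, one_pow]) ?_
  have key : (j : ℚ_[p]) ^ (r + 1) * (((j : ℚ_[p]) ^ r)⁻¹ - (j : ℚ_[p]) ^ (p - 1 - r))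
      = -(((j : ℤ) : ℚ_[p]) ^ p - (j : ℤ)) := by
    rw [mul_sub, ← pow_add, show r + 1 + (p - 1 - r) = p by omega]
    push_cast
    field_simp
    ring
  rw [key]
  exact neg_mem (intCast_pow_sub_mem_pBall_one _)

theorem sum_inv_cube_add_two_mul_bernoulli_mem_pBall_one {m : ℕ} (hp5 : 5 ≤ p)
    (hm : p = 2 * m + 1) :
    ∑ j ∈ Icc 1 m, ((j : ℚ_[p]) ^ 3)⁻¹ + 2 * (bernoulli (p - 3) : ℚ_[p]) ∈ pBall p 1 := by
  have hfermat : ∑ j ∈ Icc 1 m, (((j : ℚ_[p]) ^ 3)⁻¹ - (j : ℚ_[p]) ^ (p - 1 - 3)) ∈ pBall p 1 :=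
    sum_mem fun j hj => by
      rw [mem_Icc] at hj
      exact inv_pow_sub_pow_mem_pBall_one (by omega) (by omega) (by omega)
  rw [sum_sub_distrib, show p - 1 - 3 = p - 4 by omega] at hfermat
  convert add_mem hfermat (sum_pow_add_two_mul_bernoulli_mem_pBall_one hp5 hm) using 1
  ring

theorem sum_choose_mul_inv_sq_sub_bernoulli_mem_pBall_two {m : ℕ} (hp5 : 5 ≤ p)
    (hm : p = 2 * m + 1) :
    ∑ k ∈ Icc 1 (p - 1), ((p - 1).choose k : ℚ_[p]) * ((k : ℚ_[p]) ^ 2)⁻¹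
      - 3 * p / 4 * (bernoulli (p - 3) : ℚ_[p]) ∈ pBall p 2 := by
  set X := ∑ k ∈ Icc 1 (p - 1), ((p - 1).choose k : ℚ_[p]) * ((k : ℚ_[p]) ^ 2)⁻¹
  set S1 := ∑ k ∈ Icc 1 (p - 1), (-1) ^ k * ((k : ℚ_[p]) ^ 2)⁻¹
  set S2 := ∑ k ∈ Icc 1 (p - 1), (-1) ^ k * (harmonic k : ℚ_[p]) * ((k : ℚ_[p]) ^ 2)⁻¹
  set S3 := ∑ k ∈ Icc 1 (p - 1), (-1) ^ k * ((k : ℚ_[p]) ^ 3)⁻¹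
  set H3 := ∑ k ∈ Icc 1 (p - 1), ((k : ℚ_[p]) ^ 3)⁻¹
  set T := ∑ j ∈ Icc 1 m, ((j : ℚ_[p]) ^ 3)⁻¹
  set B : ℚ_[p] := (bernoulli (p - 3) : ℚ_[p])
  have hS3 : S3 = T / 4 - H3 := sum_neg_one_pow_mul_inv_cube hm
  have key : X - 3 * p / 4 * B
      = (X - (S1 - p * S2)) + (S1 + p / 4 * T) - p * ((2 * S2 - S3) * 2⁻¹)
        - p * ((T + 2 * B) * (3 * (2⁻¹) ^ 3)) + p * (H3 * 2⁻¹) := by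
    rw [hS3]
    ring
  have hhalf : (2 : ℚ_[p])⁻¹ ∈ PadicInt.subring p := inv_two_mem_subring (by omega)
  rw [key]
  refine add_mem (sub_mem (sub_mem (add_mem sum_choose_mul_inv_sq_sub_mem_pBall_two
    (sum_neg_one_pow_mul_inv_sq_add_mem_pBall_two hm)) ?_) ?_) ?_ <;>
    refine mul_mem_pBall (m := 1) (n := 1) p_mem_pBall_one
      (mul_mem_pBall_of_mem_subring ?_ ?_)
  · exact two_mul_sum_harmonic_sub_mem_pBall_one ⟨m, hm⟩
  · exact hhalf
  · exact sum_inv_cube_add_two_mul_bernoulli_mem_pBall_one hp5 hm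
  · exact mul_mem (natCast_mem _ 3) (pow_mem hhalf 3)
  · exact sum_inv_pow_mem_pBall_one ⟨m, hm⟩ (by decide)
  · exact hhalf

end ChooseInvSqCongr

theorem stmt17 (p : ℕ) (hp : p.Prime) (hp3 : 3 < p) :
    (∑ k ∈ Finset.Icc 1 (p - 1), (1 : ℚ) / (k : ℚ) ^ 2 * ((p - 1).choose k)) - ((3 * (p : ℚ) / 4) * bernoulli (p - 3)) = 0 ∨ (2 : ℤ) ≤ padicValRat p ((∑ k ∈ Finset.Icc 1 (p - 1), (1 : ℚ) / (k : ℚ) ^ 2 * ((p - 1).choose k)) - ((3 * (p : ℚ) / 4) * bernoulli (p - 3))) := by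
  have : Fact p.Prime := ⟨hp⟩
  obtain ⟨m, hm⟩ := hp.odd_of_ne_two (by omega)
  refine ChooseInvSqCongr.eq_zero_or_le_padicValRat (n := 2) ?_
  convert ChooseInvSqCongr.sum_choose_mul_inv_sq_sub_bernoulli_mem_pBall_two (by omega) hm using 1
  push_cast
  congr 1
  exact sum_congr rfl fun k _ => by ring
end
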